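/- Let U = B_s A_s ⋯ B_1 A_1 be a product of unitaries on a finite-dimensional Hilbert space H, and suppose ξ is a unit vector with B_i ξ = ξ for all i. Then for every vector φ ∈ H and scalars α, β ∈ ℂ, projecting the state ∏_{i=s}^{1} (|0⟩⟨0| ⊗ B_i + |1⟩⟨1| ⊗ B_i A_i) ((α|0⟩ + β|1⟩) ⊗ φ) onto the subspace ℂ² ⊗ span{ξ} via (I ⊗ |ξ⟩⟨ξ|) gives (α ⟨ξ, φ⟩ |0⟩ + β ⟨ξ, U φ⟩ |1⟩) ⊗ ξ, i.e. the same result as projecting (|0⟩⟨0| ⊗ I + |1⟩⟨1| ⊗ U)((α|0⟩ + β|1⟩) ⊗ φ). -/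
import Mathlib


open Matrix Kronecker

noncomputable section

/-- Projector `|b⟩⟨b|` on one qubit. -/
def proj (b : Fin 2) : Matrix (Fin 2) (Fin 2) ℂ :=
  fun i j => if i = b ∧ j = b then 1 else 0

lemma proj_mul (b c : Fin 2) : proj b * proj c = if b = c then proj b else 0 := by
  ext i j
  fin_cases b <;> fin_cases c <;> fin_cases i <;> fin_cases j <;>
    simp [proj, Matrix.mul_apply, Fin.sum_univ_two]

lemma proj_add : proj 0 + proj 1 = (1 : Matrix (Fin 2) (Fin 2) ℂ) := by
  ext i j
  fin_cases i <;> fin_cases j <;> simp [proj, Matrix.one_apply]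

lemma prod_split {ι : Type*} [Fintype ι] [DecidableEq ι]
    (l : List (Matrix ι ι ℂ × Matrix ι ι ℂ)) :
    (l.map (fun p => proj 0 ⊗ₖ p.1 + proj 1 ⊗ₖ p.2)).prod
      = proj 0 ⊗ₖ (l.map Prod.fst).prod + proj 1 ⊗ₖ (l.map Prod.snd).prod := by
  induction l with
  | nil =>
      simp only [List.map_nil, List.prod_nil]
      rw [← Matrix.add_kronecker, proj_add, Matrix.one_kronecker_one]
  | cons a l ih =>
      simp only [List.map_cons, List.prod_cons, ih, add_mul, mul_add,
        ← Matrix.mul_kronecker_mul, proj_mul]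
      norm_num [Matrix.zero_kronecker]

lemma kron_mulVec {ι : Type*} [Fintype ι] [DecidableEq ι]
    (M : Matrix (Fin 2) (Fin 2) ℂ) (N : Matrix ι ι ℂ) (u : Fin 2 → ℂ) (v : ι → ℂ) :
    (M ⊗ₖ N).mulVec (fun p : Fin 2 × ι => u p.1 * v p.2)
      = fun p => M.mulVec u p.1 * N.mulVec v p.2 := by
  funext p
  simp only [Matrix.mulVec, dotProduct, Fintype.sum_prod_type,
    Matrix.kroneckerMap_apply]
  rw [Finset.sum_mul_sum]
  exact Finset.sum_congr rfl fun i _ => Finset.sum_congr rfl fun j _ => by ring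

lemma vecMul_fix {ι : Type*} [Fintype ι] [DecidableEq ι]
    (M : Matrix ι ι ℂ) (hM : M ∈ Matrix.unitaryGroup ι ℂ) (ξ : ι → ℂ)
    (h : M.mulVec ξ = ξ) : (star ξ) ᵥ* M = star ξ := by
  have h2 : Mᴴ.mulVec ξ = ξ := by
    conv_lhs => rw [← h]
    rw [Matrix.mulVec_mulVec]
    have : Mᴴ * M = 1 := by
      simpa [Matrix.star_eq_conjTranspose] using hM.1
    rw [this, Matrix.one_mulVec]
  calc (star ξ) ᵥ* M = star (Mᴴ.mulVec ξ) := by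
        rw [Matrix.star_mulVec, Matrix.conjTranspose_conjTranspose]
    _ = star ξ := by rw [h2]

lemma vecMul_list_prod {ι : Type*} [Fintype ι] [DecidableEq ι]
    (l : List (Matrix ι ι ℂ)) (ξ : ι → ℂ)
    (h : ∀ m ∈ l, (star ξ) ᵥ* m = star ξ) : (star ξ) ᵥ* l.prod = star ξ := by
  induction l with
  | nil => simp
  | cons a l ih =>
      rw [List.prod_cons, ← Matrix.vecMul_vecMul, h a (by simp),
        ih fun m hm => h m (by simp [hm])]

lemma rank1_mulVec {ι : Type*} [Fintype ι] [DecidableEq ι] (ξ ψ : ι → ℂ) :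
    Matrix.mulVec (fun i j => ξ i * (starRingEnd ℂ) (ξ j) : Matrix ι ι ℂ) ψ
      = fun x => ξ x * ∑ j, (starRingEnd ℂ) (ξ j) * ψ j := by
  funext x
  simp only [Matrix.mulVec, dotProduct, Finset.mul_sum]
  exact Finset.sum_congr rfl fun j _ => by ring

lemma proj_mulVec (b : Fin 2) (u : Fin 2 → ℂ) :
    (proj b).mulVec u = fun i => if i = b then u b else 0 := by
  funext i
  fin_cases b <;> fin_cases i <;>
    simp [proj, Matrix.mulVec, dotProduct, Fin.sum_univ_two]

lemma step {ι : Type*} [Fintype ι] [DecidableEq ι] (M N : Matrix ι ι ℂ)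
    (ξ φ : ι → ℂ) (α β : ℂ) (hM : (star ξ) ᵥ* M = star ξ) :
    (((1 : Matrix (Fin 2) (Fin 2) ℂ) ⊗ₖ
        (fun i j => ξ i * (starRingEnd ℂ) (ξ j) : Matrix ι ι ℂ)).mulVec
      ((proj 0 ⊗ₖ M + proj 1 ⊗ₖ N).mulVec
        (fun p : Fin 2 × ι => ![α, β] p.1 * φ p.2)))
    = fun p : Fin 2 × ι =>
        ![α * (∑ i, (starRingEnd ℂ) (ξ i) * φ i),
          β * (∑ i, (starRingEnd ℂ) (ξ i) * N.mulVec φ i)] p.1 * ξ p.2 := by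
  set K : Matrix ι ι ℂ := fun i j => ξ i * (starRingEnd ℂ) (ξ j) with hK
  have key : ((1 : Matrix (Fin 2) (Fin 2) ℂ) ⊗ₖ K) * (proj 0 ⊗ₖ M + proj 1 ⊗ₖ N)
      = proj 0 ⊗ₖ (K * M) + proj 1 ⊗ₖ (K * N) := by
    rw [mul_add, ← Matrix.mul_kronecker_mul, ← Matrix.mul_kronecker_mul,
      one_mul, one_mul]
  rw [Matrix.mulVec_mulVec, key, Matrix.add_mulVec, kron_mulVec, kron_mulVec]
  have hKM : ∀ (P : Matrix ι ι ℂ), (K * P).mulVec φ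
      = fun x => ξ x * ∑ j, (starRingEnd ℂ) (ξ j) * P.mulVec φ j := by
    intro P
    rw [← Matrix.mulVec_mulVec, hK, rank1_mulVec]
  have hsum : ∑ j, (starRingEnd ℂ) (ξ j) * M.mulVec φ j
      = ∑ j, (starRingEnd ℂ) (ξ j) * φ j := by
    have h1 := Matrix.dotProduct_mulVec (star ξ) M φ
    rw [hM] at h1
    simpa [dotProduct, Pi.star_apply] using h1
  funext p
  obtain ⟨i, x⟩ := p
  simp only [hKM, hsum, proj_mulVec]
  fin_cases i <;> simp <;> ring

/-- projecting
`∏_{i=s}^{1}(|0⟩⟨0| ⊗ B_i + |1⟩⟨1| ⊗ B_i A_i) ((α|0⟩+β|1⟩) ⊗ φ)` with `I ⊗ |ξ⟩⟨ξ|`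
gives `(α⟨ξ,φ⟩|0⟩ + β⟨ξ,Uφ⟩|1⟩) ⊗ ξ`, i.e. the same as projecting
`(|0⟩⟨0| ⊗ I + |1⟩⟨1| ⊗ U)((α|0⟩+β|1⟩) ⊗ φ)`, where `U = B_s A_s ⋯ B_1 A_1` and
`ξ` is a common unit fixed vector of the `B_i`. -/
theorem stmt1 {ι : Type*} [Fintype ι] [DecidableEq ι] (s : ℕ)
    (A B : Fin s → Matrix ι ι ℂ)
    (hA : ∀ i, A i ∈ Matrix.unitaryGroup ι ℂ)
    (hB : ∀ i, B i ∈ Matrix.unitaryGroup ι ℂ)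
    (ξ : ι → ℂ) (hξ : ∑ i, (starRingEnd ℂ) (ξ i) * ξ i = 1)
    (hfix : ∀ i, (B i).mulVec ξ = ξ)
    (φ : ι → ℂ) (α β : ℂ) :
    (((1 : Matrix (Fin 2) (Fin 2) ℂ) ⊗ₖ
        (fun i j => ξ i * (starRingEnd ℂ) (ξ j) : Matrix ι ι ℂ)).mulVec
      (((List.ofFn fun i : Fin s =>
          proj 0 ⊗ₖ B i + proj 1 ⊗ₖ (B i * A i)).reverse.prod).mulVec
        (fun p : Fin 2 × ι => ![α, β] p.1 * φ p.2)))
    = (fun p : Fin 2 × ι =>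
        ![α * (∑ i, (starRingEnd ℂ) (ξ i) * φ i),
          β * (∑ i, (starRingEnd ℂ) (ξ i) *
            ((List.ofFn fun i : Fin s => B i * A i).reverse.prod).mulVec φ i)] p.1 * ξ p.2)
    ∧
    (((1 : Matrix (Fin 2) (Fin 2) ℂ) ⊗ₖ
        (fun i j => ξ i * (starRingEnd ℂ) (ξ j) : Matrix ι ι ℂ)).mulVec
      ((proj 0 ⊗ₖ (1 : Matrix ι ι ℂ) +
          proj 1 ⊗ₖ (List.ofFn fun i : Fin s => B i * A i).reverse.prod).mulVec
        (fun p : Fin 2 × ι => ![α, β] p.1 * φ p.2)))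
    = (fun p : Fin 2 × ι =>
        ![α * (∑ i, (starRingEnd ℂ) (ξ i) * φ i),
          β * (∑ i, (starRingEnd ℂ) (ξ i) *
            ((List.ofFn fun i : Fin s => B i * A i).reverse.prod).mulVec φ i)] p.1 * ξ p.2) := by
  have hPB : (star ξ) ᵥ* (List.ofFn B).reverse.prod = star ξ := by
    apply vecMul_list_prod
    intro m hm
    rw [List.mem_reverse, List.mem_ofFn] at hm
    obtain ⟨i, rfl⟩ := hm
    exact vecMul_fix (B i) (hB i) ξ (hfix i)
  have hprod : (List.ofFn fun i : Fin s =>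
        proj 0 ⊗ₖ B i + proj 1 ⊗ₖ (B i * A i)).reverse.prod
      = proj 0 ⊗ₖ (List.ofFn B).reverse.prod +
        proj 1 ⊗ₖ (List.ofFn fun i : Fin s => B i * A i).reverse.prod := by
    have h1 : (List.ofFn fun i : Fin s =>
          proj 0 ⊗ₖ B i + proj 1 ⊗ₖ (B i * A i)).reverse
        = ((List.ofFn fun i : Fin s => (B i, B i * A i)).reverse).map
            (fun p => proj 0 ⊗ₖ p.1 + proj 1 ⊗ₖ p.2) := by
      rw [List.map_reverse, List.map_ofFn]
      rfl
    rw [h1, prod_split, List.map_reverse, List.map_reverse, List.map_ofFn,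
      List.map_ofFn]
    rfl
  constructor
  · rw [hprod]
    exact step _ _ ξ φ α β hPB
  · exact step _ _ ξ φ α β (Matrix.vecMul_one _)
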